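/- arXiv:2005.06713 — 3 statements merged into one kernel-verified Lean document; each statement's English description precedes it below -/
import Mathlib

section
/- Let (F_n)_{n=0}^∞ be an infinite sequence of rational functions F_n ∈ ℂ(X) and let K ≥ 1. Assume there exist infinitely many α ∈ ℂ such that each F_n(α) is well defined and the sequence (F_n(α))_{n=0}^∞ is a linear recurrence sequence over ℂ of order at most K. Then (F_n)_{n=0}^∞ is a linear recurrence sequence over ℂ(X) of order at most K. -/
open Polynomial

noncomputable section

/-- `z` is a root of unity. -/
def IsRootOfUnity (z : ℂ) : Prop := ∃ n : ℕ, 0 < n ∧ z ^ n = 1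

/-- The degree of a rational function. -/
def ratDeg (f : RatFunc ℂ) : ℕ := max f.num.natDegree f.denom.natDegree

/-- A polynomial over `ℂ` has all coefficients algebraic over `ℚ`,
i.e. it is a polynomial over `ℚ̄`. -/
def Polynomial.AlgCoeffs (p : Polynomial ℂ) : Prop := ∀ n, IsAlgebraic ℚ (p.coeff n)

/-- A rational function over `ℂ` is defined over `ℚ̄`. -/
def RatFunc.AlgCoeffs (f : RatFunc ℂ) : Prop :=
  f.num.AlgCoeffs ∧ f.denom.AlgCoeffs

/-- A finite Blaschke product. -/
def IsFiniteBlaschke (B : RatFunc ℂ) : Prop :=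
  ∃ (ζ : ℂ) (n : ℕ) (a : Fin n → ℂ) (m : Fin n → ℕ),
    ‖ζ‖ = 1 ∧ (∀ i, ‖a i‖ < 1) ∧ (∀ i, 0 < m i) ∧
    B = RatFunc.C ζ *
      ∏ i, ((RatFunc.X - RatFunc.C (a i)) /
            (1 - RatFunc.C ((starRingEnd ℂ) (a i)) * RatFunc.X)) ^ m i

/-- A quotient of finite Blaschke products. -/
def IsBlaschkeQuotient (Q : RatFunc ℂ) : Prop :=
  ∃ B₁ B₂ : RatFunc ℂ, IsFiniteBlaschke B₁ ∧ IsFiniteBlaschke B₂ ∧ Q = B₁ / B₂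

/-- Composition `p ∘ q` of rational functions. -/
def ratComp (p q : RatFunc ℂ) : RatFunc ℂ :=
  RatFunc.eval (algebraMap ℂ (RatFunc ℂ)) q p

/-- A pair of rational functions is exceptional if both components can be
decomposed through a common rational function via quotients of finite Blaschke
products. -/
def IsExceptionalPair (g₁ g₂ : RatFunc ℂ) : Prop :=
  ∃ Q₁ Q₂ g : RatFunc ℂ, IsBlaschkeQuotient Q₁ ∧ IsBlaschkeQuotient Q₂ ∧
    g₁ = ratComp Q₁ g ∧ g₂ = ratComp Q₂ g

/-- Evaluation of a rational function at a complex point. -/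
def ratEval (f : RatFunc ℂ) (α : ℂ) : ℂ := RatFunc.eval (RingHom.id ℂ) α f

/-- The exceptional set `𝔈_{𝐚,𝐟}` for a family of rational functions. -/
def exceptionalSetR {k : ℕ} (a f : Fin k → RatFunc ℂ) : Set ℂ :=
  {α | (∃ i j : Fin k, i < j ∧ IsRootOfUnity (ratEval (f i) α / ratEval (f j) α)) ∨
    ∃ i : Fin k, ratEval (a i) α = 0 ∨ ratEval (f i) α = 0}

/-- The exceptional set `𝔈_{𝐚,𝐟}` for a family of polynomials. -/
def exceptionalSetP {k : ℕ} (a f : Fin k → Polynomial ℂ) : Set ℂ :=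
  {α | (∃ i j : Fin k, i < j ∧ IsRootOfUnity ((f i).eval α / (f j).eval α)) ∨
    ∃ i : Fin k, (a i).eval α = 0 ∨ (f i).eval α = 0}

/-- The degree of the Galois closure of `ℚ(α)` over `ℚ`. -/
def galDeg (α : ℂ) : ℕ :=
  Module.finrank ℚ
    (IntermediateField.normalClosure ℚ (IntermediateField.adjoin ℚ ({α} : Set ℂ)) ℂ)

/-- A primitive integer polynomial associated with the minimal polynomial of `α`. -/
def intMinpoly (α : ℂ) : Polynomial ℤ :=
  (IsLocalization.integerNormalization (nonZeroDivisors ℤ) (minpoly ℚ α)).primPart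

/-- The absolute logarithmic Weil height of an algebraic number `α`,
expressed via the Mahler measure of its primitive integer minimal polynomial. -/
def weilHeight (α : ℂ) : ℝ :=
  (1 / ((minpoly ℚ α).natDegree : ℝ)) *
    Real.log ((|(intMinpoly α).leadingCoeff| : ℝ) *
      ((((intMinpoly α).map (Int.castRingHom ℂ)).roots.map fun z => max 1 ‖z‖).prod))

/-- The division group `Γ^div` of a subgroup `Γ ⊆ ℚ̄*`. -/
def divGroup (Γ : Subgroup ℂˣ) : Set ℂ :=
  {α | IsAlgebraic ℚ α ∧ ∃ n : ℕ, 1 ≤ n ∧ ∃ u ∈ Γ, ((u : ℂˣ) : ℂ) = α ^ n}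

/-- Rational functions multiplicatively independent modulo a set `S ⊆ ℂ`. -/
def MultIndepModulo {t : ℕ} (S : Set ℂ) (ψ : Fin t → RatFunc ℂ) : Prop :=
  ∀ h : Fin t → ℤ, h ≠ 0 → ∀ c ∈ S, (∏ i, ψ i ^ h i) ≠ RatFunc.C c

/-- A sequence over a commutative ring is a linear recurrence sequence of order at most `K`. -/
def IsLinRecOfOrderLE {R : Type*} [CommRing R] (u : ℕ → R) (K : ℕ) : Prop :=
  ∃ k ≤ K, ∃ A : Fin k → R, ∀ n, u (n + k) = ∑ i : Fin k, A i * u (n + i)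

/-!
Form the linear functionals `c ↦ ∑ₙ cₙ F_{n+j}` on finitely supported coefficient sequences
`c` over `ℂ(X)`. If the first `K` of them vanish at some `c` but the `K`-th does not, then
specialising at one of the infinitely many good points `α` that avoids the finitely many zeros
of that value and poles of the `cₙ` contradicts the recurrence of `(F_n(α))`. So the `K`-th
functional vanishes on the common kernel of the first `K`, hence is a linear combination of
them, and the coefficients of that combination are a recurrence for `(F_n)`.
-/

namespace RatFunc

universe u

variable {K L : Type u} [Field K] [Field L] (f : K →+* L) (a : L)

theorem eval₂_denom_add_ne_zero {x y : RatFunc K} (hx : x.denom.eval₂ f a ≠ 0)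
    (hy : y.denom.eval₂ f a ≠ 0) : (x + y).denom.eval₂ f a ≠ 0 :=
  ne_zero_of_dvd_ne_zero (by rw [eval₂_mul]; exact mul_ne_zero hx hy)
    (eval₂_dvd f a (denom_add_dvd x y))

theorem eval₂_denom_mul_ne_zero {x y : RatFunc K} (hx : x.denom.eval₂ f a ≠ 0)
    (hy : y.denom.eval₂ f a ≠ 0) : (x * y).denom.eval₂ f a ≠ 0 :=
  ne_zero_of_dvd_ne_zero (by rw [eval₂_mul]; exact mul_ne_zero hx hy)
    (eval₂_dvd f a (denom_mul_dvd x y))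

theorem eval₂_denom_sum_ne_zero {ι : Type*} (s : Finset ι) (x : ι → RatFunc K)
    (hx : ∀ i ∈ s, (x i).denom.eval₂ f a ≠ 0) :
    (∑ i ∈ s, x i).denom.eval₂ f a ≠ 0 :=
  Finset.sum_induction x (fun y => y.denom.eval₂ f a ≠ 0)
    (fun _ _ => eval₂_denom_add_ne_zero f a) (by simp) hx

theorem eval_sum {ι : Type*} (s : Finset ι) (x : ι → RatFunc K)
    (hx : ∀ i ∈ s, (x i).denom.eval₂ f a ≠ 0) :
    RatFunc.eval f a (∑ i ∈ s, x i) = ∑ i ∈ s, RatFunc.eval f a (x i) := by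
  induction s using Finset.cons_induction with
  | empty => simp
  | cons i s hi ih =>
    have hs : ∀ j ∈ s, (x j).denom.eval₂ f a ≠ 0 := fun j hj =>
      hx j (Finset.mem_cons_of_mem hj)
    rw [Finset.sum_cons, Finset.sum_cons, eval_add f a (hx i (Finset.mem_cons_self i s))
      (eval₂_denom_sum_ne_zero f a s x hs), ih hs]

theorem eval_ne_zero {x : RatFunc K} (hnum : x.num.eval₂ f a ≠ 0)
    (hdenom : x.denom.eval₂ f a ≠ 0) : RatFunc.eval f a x ≠ 0 :=
  div_ne_zero hnum hdenom

end RatFunc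

theorem IsLinRecOfOrderLE.sum_mul_shift_eq_zero {R : Type*} [CommRing R] {u : ℕ → R} {K : ℕ}
    (hu : IsLinRecOfOrderLE u K) (s : Finset ℕ) (c : ℕ → R)
    (hc : ∀ j < K, ∑ n ∈ s, c n * u (n + j) = 0) : ∑ n ∈ s, c n * u (n + K) = 0 := by
  obtain ⟨k, hk, A, hA⟩ := hu
  have hshift : ∀ n, u (n + K) = ∑ i : Fin k, A i * u (n + (K - k + i)) := fun n => by
    have := hA (n + (K - k))
    rw [show n + (K - k) + k = n + K by omega] at this
    simpa only [add_assoc] using this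
  calc ∑ n ∈ s, c n * u (n + K)
      = ∑ i : Fin k, A i * ∑ n ∈ s, c n * u (n + (K - k + i)) := by
        simp_rw [hshift, Finset.mul_sum]
        rw [Finset.sum_comm]
        exact Finset.sum_congr rfl fun _ _ => Finset.sum_congr rfl fun _ _ => by ring
    _ = 0 := Finset.sum_eq_zero fun i _ => by rw [hc _ (by omega), mul_zero]

theorem isLinRecOfOrderLE_of_forall_sum_mul_shift {L : Type*} [Field L] (u : ℕ → L) (K : ℕ)
    (h : ∀ c : ℕ →₀ L, (∀ j < K, ∑ n ∈ c.support, c n * u (n + j) = 0) →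
      ∑ n ∈ c.support, c n * u (n + K) = 0) :
    IsLinRecOfOrderLE u K := by
  set φ : ℕ → (ℕ →₀ L) →ₗ[L] L := fun j =>
    Finsupp.linearCombination L fun n => u (n + j)
  have hφ : ∀ j c, φ j c = ∑ n ∈ c.support, c n * u (n + j) := fun j c => by
    simp [φ, Finsupp.linearCombination_apply, Finsupp.sum]
  have hker : ⨅ j : Fin K, LinearMap.ker (φ j) ≤ LinearMap.ker (φ K) := fun c hc => by
    simp only [Submodule.mem_iInf, LinearMap.mem_ker, hφ] at hc ⊢
    exact h c fun j hj => hc ⟨j, hj⟩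
  obtain ⟨A, hA⟩ :=
    (Submodule.mem_span_range_iff_exists_fun L).1 (mem_span_of_iInf_ker_le_ker hker)
  refine ⟨K, le_rfl, A, fun n => ?_⟩
  simpa [φ, mul_comm] using (LinearMap.congr_fun hA (Finsupp.single n 1)).symm

theorem sum_mul_shift_eq_zero_of_specialisations {k : Type*} [Field k] (F : ℕ → RatFunc k)
    (K : ℕ) (h : {α : k | (∀ n, (F n).denom.eval α ≠ 0) ∧
      IsLinRecOfOrderLE (fun n => RatFunc.eval (RingHom.id k) α (F n)) K}.Infinite)
    (c : ℕ →₀ RatFunc k) (hc : ∀ j < K, ∑ n ∈ c.support, c n * F (n + j) = 0) :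
    ∑ n ∈ c.support, c n * F (n + K) = 0 := by
  by_contra hg
  set g := ∑ n ∈ c.support, c n * F (n + K)
  have hbad :
      ({α | g.num.eval α = 0} ∪ ⋃ n ∈ c.support, {α | (c n).denom.eval α = 0}).Finite :=
    (finite_setOfPred_isRoot (RatFunc.num_ne_zero hg)).union
      (c.support.finite_toSet.biUnion fun _ _ =>
      finite_setOfPred_isRoot (RatFunc.denom_ne_zero _))
  obtain ⟨α, ⟨hFα, hrec⟩, hα⟩ := (h.sdiff hbad).nonempty
  simp only [Set.mem_union, Set.mem_ofPred_eq, Set.mem_iUnion, not_or, not_exists] at hα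
  obtain ⟨hgα, hcα⟩ := hα
  have hdenom : ∀ j, ∀ n ∈ c.support, (c n * F (n + j)).denom.eval α ≠ 0 := fun j n hn =>
    RatFunc.eval₂_denom_mul_ne_zero _ _ (hcα n hn) (hFα _)
  have heval : ∀ j, RatFunc.eval (RingHom.id k) α (∑ n ∈ c.support, c n * F (n + j)) =
      ∑ n ∈ c.support, RatFunc.eval (RingHom.id k) α (c n) *
        RatFunc.eval (RingHom.id k) α (F (n + j)) := fun j => by
    rw [RatFunc.eval_sum _ _ _ _ (hdenom j)]
    exact Finset.sum_congr rfl fun n hn => RatFunc.eval_mul _ _ (hcα n hn) (hFα _)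
  refine RatFunc.eval_ne_zero (RingHom.id k) α hgα
    (RatFunc.eval₂_denom_sum_ne_zero _ _ _ _ (hdenom K)) ?_
  rw [heval]
  exact hrec.sum_mul_shift_eq_zero _ _ fun j hj => by rw [← heval, hc j hj, RatFunc.eval_zero]

theorem linear_recurrence_from_specialisations_general
    (F : ℕ → RatFunc ℂ) (K : ℕ)
    (h : {α : ℂ | (∀ n, (F n).denom.eval α ≠ 0) ∧
      IsLinRecOfOrderLE (fun n => ratEval (F n) α) K}.Infinite) :
    IsLinRecOfOrderLE F K :=
  isLinRecOfOrderLE_of_forall_sum_mul_shift F K (sum_mul_shift_eq_zero_of_specialisations F K h)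

/-- **Theorem (specialisations of sequences of rational functions).**
If $(F_n)_{n ≥ 0}$ is a sequence of rational functions over $ℂ$ and there are infinitely
many $α ∈ ℂ$ such that every $F_n(α)$ is well defined and $(F_n(α))_{n ≥ 0}$ is a linear
recurrence sequence of order at most $K$, then $(F_n)_{n ≥ 0}$ is a linear recurrence
sequence over $ℂ(X)$ of order at most $K$. -/
theorem linear_recurrence_from_specialisations
    (F : ℕ → RatFunc ℂ) (K : ℕ) (hK : 1 ≤ K)
    (h : {α : ℂ | (∀ n, (F n).denom.eval α ≠ 0) ∧
      IsLinRecOfOrderLE (fun n => ratEval (F n) α) K}.Infinite) :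
    IsLinRecOfOrderLE F K :=
  linear_recurrence_from_specialisations_general F K h

end
end

section
/- Let h_i = f_i/g_i with f_i, g_i ∈ ℂ[T] for i = 1,…,m, and assume Z(f_1⋯f_m) ∩ Z(g_1⋯g_m) = ∅. Then for all integers n_1,…,n_m ≥ 0 and all a ∈ ℂ^*, one has Mult(h_1^{n_1}⋯h_m^{n_m} − a) ≤ Σ_{i=1}^m (deg f_i + deg g_i). -/
/-!
Write `F = ∏ fᵢ^nᵢ`, `G = ∏ gᵢ^nᵢ` and `P = F - a G`, so that the rational function is `P / G`
and its zeros are zeros of `P`. At a zero `z` of `P` of multiplicity `μ`, `F(z) = a G(z)` with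
`a ≠ 0`, so the coprimality hypothesis forces every `fᵢ` and `gᵢ` to be nonzero at `z`. The
Wronskian `W(P, G) = W(F, G)` vanishes to order at least `μ - 1` at `z`, and it factors as
`∏ (fᵢ gᵢ)^(nᵢ-1)` (nonzero at `z`) times `N = ∑ nᵢ W(fᵢ, gᵢ) ∏_{j ≠ i} fⱼ gⱼ`, whose degree is
less than `∑ (deg fᵢ + deg gᵢ)`. Since `G(z) ≠ 0 = P(z)`, `W(P, G) ≠ 0`, hence `N ≠ 0` and
`μ - 1 ≤ deg N`.
-/

open Polynomial

noncomputable section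

/-- The largest multiplicity of a zero of a rational function (a zero of `h` being a
root of its reduced numerator). -/
def ratMult (h : RatFunc ℂ) : ℕ :=
  h.num.roots.toFinset.sup fun z => h.num.roots.count z

namespace Polynomial

open Finset

section Wronskian

variable {R : Type*} [CommRing R]

theorem wronskian_mul_mul (a b c d : R[X]) :
    wronskian (a * c) (b * d) = wronskian a b * (c * d) + a * b * wronskian c d := by
  simp only [wronskian, derivative_mul]
  ring

theorem wronskian_pow_pow (a b : R[X]) (n : ℕ) :
    wronskian (a ^ n) (b ^ n) = C (n : R) * (a * b) ^ (n - 1) * wronskian a b := by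
  cases n with
  | zero => simp [wronskian]
  | succ k =>
    simp only [wronskian, derivative_pow_succ, Nat.add_sub_cancel, mul_pow]
    push_cast
    ring

theorem wronskian_prod_prod {ι : Type*} [DecidableEq ι] (s : Finset ι) (a b : ι → R[X]) :
    wronskian (∏ i ∈ s, a i) (∏ i ∈ s, b i) =
      ∑ i ∈ s, wronskian (a i) (b i) * ∏ j ∈ s.erase i, a j * b j := by
  induction s using Finset.induction with
  | empty => simp [wronskian]
  | insert k s hk ih =>
    rw [prod_insert hk, prod_insert hk, wronskian_mul_mul, ih, sum_insert hk, erase_insert hk,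
      ← prod_mul_distrib, mul_sum]
    congr 1
    refine sum_congr rfl fun i hi => ?_
    rw [erase_insert_of_ne (ne_of_mem_of_not_mem hi hk).symm,
      prod_insert fun h => hk (mem_of_mem_erase h)]
    ring

theorem wronskian_prod_pow_prod_pow {ι : Type*} [DecidableEq ι] (s : Finset ι) (a b : ι → R[X])
    (n : ι → ℕ) (hn : ∀ i ∈ s, n i ≠ 0) :
    wronskian (∏ i ∈ s, a i ^ n i) (∏ i ∈ s, b i ^ n i) =
      (∏ i ∈ s, (a i * b i) ^ (n i - 1)) *
        ∑ i ∈ s, C (n i : R) * wronskian (a i) (b i) * ∏ j ∈ s.erase i, a j * b j := by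
  have hpow : ∀ i ∈ s, a i ^ n i * b i ^ n i = (a i * b i) ^ (n i - 1) * (a i * b i) :=
    fun i hi => by rw [← mul_pow, ← pow_succ, Nat.sub_add_cancel (Nat.pos_of_ne_zero (hn i hi))]
  rw [wronskian_prod_prod, mul_sum]
  refine sum_congr rfl fun i hi => ?_
  rw [wronskian_pow_pow, prod_congr rfl fun j hj => hpow j (mem_of_mem_erase hj),
    prod_mul_distrib, ← mul_prod_erase s _ hi]
  ring

theorem degree_sum_C_mul_wronskian_mul_prod_lt {ι : Type*} [DecidableEq ι] (s : Finset ι)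
    (a b : ι → R[X]) (c : ι → R) :
    (∑ i ∈ s, C (c i) * wronskian (a i) (b i) * ∏ j ∈ s.erase i, a j * b j).degree <
      ↑(∑ i ∈ s, ((a i).natDegree + (b i).natDegree)) := by
  refine (degree_sum_le _ _).trans_lt ((Finset.sup_lt_iff (WithBot.bot_lt_coe _)).2 fun i hi => ?_)
  by_cases hw : wronskian (a i) (b i) = 0
  · rw [hw, mul_zero, zero_mul, degree_zero]
    exact WithBot.bot_lt_coe _
  refine degree_le_natDegree.trans_lt (WithBot.coe_lt_coe.2 ?_)
  calc (C (c i) * wronskian (a i) (b i) * ∏ j ∈ s.erase i, a j * b j).natDegree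
      ≤ (wronskian (a i) (b i)).natDegree +
          ∑ j ∈ s.erase i, ((a j).natDegree + (b j).natDegree) :=
        natDegree_mul_le.trans <| add_le_add (natDegree_C_mul_le _ _) <|
          (natDegree_prod_le _ _).trans <| sum_le_sum fun j _ => natDegree_mul_le
    _ < ∑ j ∈ s, ((a j).natDegree + (b j).natDegree) := by
        rw [← add_sum_erase s _ hi]
        exact Nat.add_lt_add_right (natDegree_wronskian_lt_add hw) _

theorem rootMultiplicity_sub_one_le_rootMultiplicity_wronskian {p q : R[X]} (z : R)
    (hw : wronskian p q ≠ 0) :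
    p.rootMultiplicity z - 1 ≤ (wronskian p q).rootMultiplicity z := by
  have hp := pow_rootMultiplicity_dvd p z
  rw [le_rootMultiplicity_iff hw]
  exact dvd_sub (((pow_dvd_pow _ (Nat.sub_le _ _)).trans hp).mul_right _)
    ((pow_sub_one_dvd_derivative_of_pow_dvd hp).mul_right _)

theorem wronskian_ne_zero_of_isRoot [IsDomain R] [CharZero R] {p q : R[X]} {z : R}
    (hp : p ≠ 0) (hpz : p.IsRoot z) (hqz : ¬ q.IsRoot z) : wronskian p q ≠ 0 := by
  intro hw
  have hpq : p * derivative q = derivative p * q := sub_eq_zero.1 hw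
  have hp' : derivative p ≠ 0 :=
    derivative_eq_zero.not.2 (natDegree_pos_iff_degree_pos.2 (degree_pos_of_root hp hpz)).ne'
  have hq : q ≠ 0 := by rintro rfl; exact hqz (by simp)
  have hne : p * derivative q ≠ 0 := hpq ▸ mul_ne_zero hp' hq
  have := congrArg (rootMultiplicity z) hpq
  rw [rootMultiplicity_mul hne, rootMultiplicity_mul (hpq ▸ hne), rootMultiplicity_eq_zero hqz,
    derivative_rootMultiplicity_of_root hpz] at this
  have := (rootMultiplicity_pos hp).2 hpz
  omega

end Wronskian

section ProdPow

variable {R ι : Type*} [CommRing R] [IsDomain R] (s : Finset ι) (f g : ι → R[X]) (n : ι → ℕ)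
  {a : R}

theorem rootMultiplicity_le_natDegree (p : R[X]) (z : R) : p.rootMultiplicity z ≤ p.natDegree := by
  obtain rfl | hp := eq_or_ne p 0
  · simp
  simpa using natDegree_le_of_dvd (pow_rootMultiplicity_dvd p z) hp

theorem eval_ne_zero_of_isRoot_prod_pow_sub_C_mul_prod_pow (hn : ∀ i ∈ s, n i ≠ 0) (ha : a ≠ 0)
    (hfg : ∀ z, ¬ ((∏ i ∈ s, f i).eval z = 0 ∧ (∏ i ∈ s, g i).eval z = 0)) {z : R}
    (hz : (∏ i ∈ s, f i ^ n i - C a * ∏ i ∈ s, g i ^ n i).IsRoot z) :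
    ∀ i ∈ s, (f i).eval z ≠ 0 ∧ (g i).eval z ≠ 0 := by
  have hFG : (∏ i ∈ s, f i ^ n i).eval z = a * (∏ i ∈ s, g i ^ n i).eval z := by
    simpa [sub_eq_zero] using hz
  have hroot : ∀ h : ι → R[X], (∏ i ∈ s, h i ^ n i).eval z = 0 → (∏ i ∈ s, h i).eval z = 0 := by
    intro h hh
    simp only [eval_prod, eval_pow, prod_eq_zero_iff] at hh ⊢
    obtain ⟨i, hi, hzi⟩ := hh
    exact ⟨i, hi, eq_zero_of_pow_eq_zero hzi⟩
  have hG : (∏ i ∈ s, g i ^ n i).eval z ≠ 0 := fun hG =>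
    hfg z ⟨hroot f (by rw [hFG, hG, mul_zero]), hroot g hG⟩
  have hF : (∏ i ∈ s, f i ^ n i).eval z ≠ 0 := hFG ▸ mul_ne_zero ha hG
  simp only [eval_prod, eval_pow, prod_ne_zero_iff] at hF hG
  exact fun i hi => ⟨ne_zero_pow (hn i hi) (hF i hi), ne_zero_pow (hn i hi) (hG i hi)⟩

theorem rootMultiplicity_prod_pow_sub_C_mul_prod_pow_le_of_ne_zero [CharZero R] [DecidableEq ι]
    (hn : ∀ i ∈ s, n i ≠ 0) (ha : a ≠ 0)
    (hfg : ∀ z, ¬ ((∏ i ∈ s, f i).eval z = 0 ∧ (∏ i ∈ s, g i).eval z = 0)) (z : R) :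
    (∏ i ∈ s, f i ^ n i - C a * ∏ i ∈ s, g i ^ n i).rootMultiplicity z ≤
      ∑ i ∈ s, ((f i).natDegree + (g i).natDegree) := by
  set G := ∏ i ∈ s, g i ^ n i
  set P := ∏ i ∈ s, f i ^ n i - C a * G
  set E := ∏ i ∈ s, (f i * g i) ^ (n i - 1)
  set N := ∑ i ∈ s, C (n i : R) * wronskian (f i) (g i) * ∏ j ∈ s.erase i, f j * g j
  by_cases hPz : P.IsRoot z
  swap
  · rw [rootMultiplicity_eq_zero hPz]
    exact Nat.zero_le _
  obtain hP0 | hP := eq_or_ne P 0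
  · simp [hP0]
  have hz := eval_ne_zero_of_isRoot_prod_pow_sub_C_mul_prod_pow s f g n hn ha hfg hPz
  have hGz : ¬ G.IsRoot z := by
    simpa [G, eval_prod, prod_ne_zero_iff] using fun i hi => pow_ne_zero _ (hz i hi).2
  have hEz : ¬ E.IsRoot z := by
    simpa [E, eval_prod, prod_ne_zero_iff] using
      fun i hi => pow_ne_zero _ (mul_ne_zero (hz i hi).1 (hz i hi).2)
  have hW : wronskian P G = E * N := by
    have hWF : wronskian P G = wronskian (∏ i ∈ s, f i ^ n i) G := by
      simp only [P, wronskian, derivative_sub, derivative_C_mul]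
      ring
    rw [hWF]
    exact wronskian_prod_pow_prod_pow s f g n hn
  have hW0 : E * N ≠ 0 := hW ▸ wronskian_ne_zero_of_isRoot hP hPz hGz
  calc P.rootMultiplicity z ≤ (wronskian P G).rootMultiplicity z + 1 := by
        have := rootMultiplicity_sub_one_le_rootMultiplicity_wronskian (q := G) z (hW ▸ hW0)
        omega
    _ = N.rootMultiplicity z + 1 := by
        rw [hW, rootMultiplicity_mul hW0, rootMultiplicity_eq_zero hEz, zero_add]
    _ ≤ N.natDegree + 1 := Nat.add_le_add_right (rootMultiplicity_le_natDegree _ _) _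
    _ ≤ ∑ i ∈ s, ((f i).natDegree + (g i).natDegree) :=
        (natDegree_lt_iff_degree_lt (right_ne_zero_of_mul hW0)).2
          (degree_sum_C_mul_wronskian_mul_prod_lt s f g _)

theorem rootMultiplicity_prod_pow_sub_C_mul_prod_pow_le [CharZero R] (ha : a ≠ 0)
    (hfg : ∀ z, ¬ ((∏ i ∈ s, f i).eval z = 0 ∧ (∏ i ∈ s, g i).eval z = 0)) (z : R) :
    (∏ i ∈ s, f i ^ n i - C a * ∏ i ∈ s, g i ^ n i).rootMultiplicity z ≤
      ∑ i ∈ s, ((f i).natDegree + (g i).natDegree) := by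
  classical
  set t := s.filter (n · ≠ 0)
  have hprod : ∀ h : ι → R[X], ∏ i ∈ t, h i ^ n i = ∏ i ∈ s, h i ^ n i := fun h =>
    prod_filter_of_ne fun i _ hi hni => hi (by rw [hni, pow_zero])
  have hdvd : ∀ h : ι → R[X], ∏ i ∈ t, h i ∣ ∏ i ∈ s, h i := fun h =>
    prod_dvd_prod_of_subset _ _ _ (filter_subset _ _)
  have hfg' : ∀ z, ¬ ((∏ i ∈ t, f i).eval z = 0 ∧ (∏ i ∈ t, g i).eval z = 0) :=
    fun z ⟨hf, hg⟩ => hfg z ⟨zero_dvd_iff.1 (hf ▸ eval_dvd (hdvd f)),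
      zero_dvd_iff.1 (hg ▸ eval_dvd (hdvd g))⟩
  rw [← hprod f, ← hprod g]
  exact (rootMultiplicity_prod_pow_sub_C_mul_prod_pow_le_of_ne_zero t f g n
    (fun i hi => (mem_filter.1 hi).2) ha hfg' z).trans (sum_le_sum_of_subset (filter_subset _ _))

end ProdPow

end Polynomial

namespace RatFunc

theorem rootMultiplicity_num_div_le {K : Type*} [Field K] (p : K[X]) {q : K[X]} (hq : q ≠ 0)
    (z : K) :
    (algebraMap K[X] (RatFunc K) p / algebraMap K[X] (RatFunc K) q).num.rootMultiplicity z ≤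
      p.rootMultiplicity z := by
  obtain rfl | hp := eq_or_ne p 0
  · simp
  exact rootMultiplicity_le_rootMultiplicity_of_dvd hp (num_div_dvd p hq) z

end RatFunc

theorem ratMult_le_of_forall_rootMultiplicity_le {h : RatFunc ℂ} {k : ℕ}
    (hk : ∀ z, h.num.rootMultiplicity z ≤ k) : ratMult h ≤ k :=
  Finset.sup_le fun z _ => (count_roots h.num).trans_le (hk z)

theorem ratMult_C (c : ℂ) : ratMult (RatFunc.C c) = 0 := by
  simp [ratMult]

/-- **Lemma (multiplicities of roots).** If $h_i = f_i/g_i$ with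
$Z(f_1⋯f_m) ∩ Z(g_1⋯g_m) = ∅$, then for all $n_1, …, n_m ≥ 0$ and $a ∈ ℂ^*$,
$\mathrm{Mult}(h_1^{n_1}⋯h_m^{n_m} − a) ≤ ∑_i (\deg f_i + \deg g_i)$. -/
theorem mult_of_product_of_powers_sub_const
    (m : ℕ) (f g : Fin m → Polynomial ℂ)
    (hZ : ∀ z : ℂ, ¬ ((∏ i, f i).eval z = 0 ∧ (∏ i, g i).eval z = 0))
    (n : Fin m → ℕ) (a : ℂ) (ha : a ≠ 0) :
    ratMult ((∏ i, (algebraMap (Polynomial ℂ) (RatFunc ℂ) (f i) /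
        algebraMap (Polynomial ℂ) (RatFunc ℂ) (g i)) ^ n i) - RatFunc.C a) ≤
      ∑ i, ((f i).natDegree + (g i).natDegree) := by
  set F := ∏ i, f i ^ n i
  set G := ∏ i, g i ^ n i
  have hprod :
      ∏ i, (algebraMap ℂ[X] (RatFunc ℂ) (f i) / algebraMap ℂ[X] (RatFunc ℂ) (g i)) ^ n i =
        algebraMap ℂ[X] (RatFunc ℂ) F / algebraMap ℂ[X] (RatFunc ℂ) G := by
    simp only [F, G, map_prod, map_pow, div_pow, Finset.prod_div_distrib]
  rw [hprod]
  obtain hG | hG := eq_or_ne G 0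
  · rw [hG, map_zero, div_zero, zero_sub, ← map_neg, ratMult_C]
    exact Nat.zero_le _
  have hsub : algebraMap ℂ[X] (RatFunc ℂ) F / algebraMap ℂ[X] (RatFunc ℂ) G - RatFunc.C a =
      algebraMap ℂ[X] (RatFunc ℂ) (F - C a * G) / algebraMap ℂ[X] (RatFunc ℂ) G := by
    rw [map_sub, map_mul, RatFunc.algebraMap_C, sub_div,
      mul_div_cancel_right₀ _ (RatFunc.algebraMap_ne_zero hG)]
  rw [hsub]
  exact ratMult_le_of_forall_rootMultiplicity_le fun z =>
    (RatFunc.rootMultiplicity_num_div_le _ hG z).trans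
      (rootMultiplicity_prod_pow_sub_C_mul_prod_pow_le _ f g n ha hZ z)

end
end

section
/- For every positive integer D, the number R(D) of roots of unity whose degree over ℚ is at most D satisfies R(D) ≤ 23·D². (Here R(D) = Σ_{m : φ(m) ≤ D} φ(m), where φ is Euler's totient function, since the roots of unity of exact order m have degree φ(m) over ℚ.) -/
open Polynomial

noncomputable section

/-!
A root of unity of order `m` has degree `φ m` over `ℚ`, so there are `∑_{φ m ≤ D} φ m ≤ D · #{m | φ m ≤ D}`
of them, and it suffices to show `#{m | φ m ≤ D} ≤ 22 D`.

Since `(m / φ m)² = ∏_{p ∣ m} (1 + (2p - 1) / (p - 1)²)`, expanding the product over sets `S` of primes and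
counting the multiples of `∏ S` gives the second-moment bound `∑_{m ≤ B} (m / φ m)² ≤ 10 B`.
An `m ∈ (X, 2X]` with `φ m ≤ D` has `(m / φ m)² ≥ (X / D)²`, so there are at most `20 D² / X` of them;
over the dyadic ranges above `X = 2D` these counts sum to at most `20 D`.
-/

open Finset
open scoped Nat

theorem sum_prod_primeFactors_one_add_le {K : Type*} [Field K] [LinearOrder K]
    [IsStrictOrderedRing K] (g : ℕ → K) (hg : ∀ p, p.Prime → 0 ≤ g p) (B : ℕ) :
    ∑ m ∈ Ioc 0 B, ∏ p ∈ m.primeFactors, (1 + g p) ≤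
      B * ∏ p ∈ Icc 2 B with p.Prime, (1 + g p / p) := by
  set P := {p ∈ Icc 2 B | p.Prime}
  have hprimes {S : Finset ℕ} (hS : S ∈ P.powerset) : ∀ p ∈ S, p.Prime := fun p hp =>
    (mem_filter.1 (mem_powerset.1 hS hp)).2
  have hswap : ∀ m S, m ∈ Ioc 0 B ∧ S ∈ m.primeFactors.powerset ↔
      m ∈ {m ∈ Ioc 0 B | S ⊆ m.primeFactors} ∧ S ∈ P.powerset := by
    intro m S
    simp only [mem_filter, mem_powerset, mem_Ioc, P]
    refine ⟨fun ⟨hm, hS⟩ => ⟨⟨hm, hS⟩, fun p hp => ?_⟩, fun ⟨h, _⟩ => h⟩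
    have hpm := hS hp
    exact mem_filter.2 ⟨mem_Icc.2 ⟨(Nat.prime_of_mem_primeFactors hpm).two_le,
      (Nat.le_of_mem_primeFactors hpm).trans hm.2⟩, Nat.prime_of_mem_primeFactors hpm⟩
  have hcard (S : Finset ℕ) : (#{m ∈ Ioc 0 B | S ⊆ m.primeFactors} : K) ≤ B / ∏ p ∈ S, p :=
    calc (#{m ∈ Ioc 0 B | S ⊆ m.primeFactors} : K) ≤ #{m ∈ Ioc 0 B | ∏ p ∈ S, p ∣ m} := by
          gcongr with m
          intro hSm
          exact (prod_dvd_prod_of_subset _ _ _ hSm).trans (Nat.prod_primeFactors_dvd m)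
      _ ≤ B / ∏ p ∈ S, p := by
          rw [Nat.Ioc_filter_dvd_card_eq_div]
          exact_mod_cast Nat.cast_div_le
  calc ∑ m ∈ Ioc 0 B, ∏ p ∈ m.primeFactors, (1 + g p)
      = ∑ S ∈ P.powerset, #{m ∈ Ioc 0 B | S ⊆ m.primeFactors} * ∏ p ∈ S, g p := by
        simp_rw [prod_one_add]
        rw [sum_comm' hswap]
        simp
    _ ≤ ∑ S ∈ P.powerset, (B / ∏ p ∈ S, p) * ∏ p ∈ S, g p := by
        gcongr with S hS
        · exact prod_nonneg fun p hp => hg p (hprimes hS p hp)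
        · exact hcard S
    _ = B * ∏ p ∈ P, (1 + g p / p) := by
        rw [prod_one_add, mul_sum]
        refine sum_congr rfl fun S _ => ?_
        rw [prod_div_distrib]
        push_cast
        ring

theorem div_totient_sq_eq_prod_primeFactors {m : ℕ} (hm : m ≠ 0) :
    ((m : ℚ) / φ m) ^ 2 = ∏ p ∈ m.primeFactors, (1 + (2 * p - 1) / (p - 1) ^ 2 : ℚ) := by
  have hm' : (m : ℚ) ≠ 0 := by exact_mod_cast hm
  rw [Nat.totient_eq_mul_prod_factors, div_mul_cancel_left₀ hm', ← prod_inv_distrib, ← prod_pow]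
  refine prod_congr rfl fun p hp => ?_
  have hp : (1 : ℚ) < p := by exact_mod_cast (Nat.prime_of_mem_primeFactors hp).one_lt
  have : (p : ℚ) - 1 ≠ 0 := by linarith
  field_simp
  ring

theorem prod_Icc_one_add_div_le_ten (B : ℕ) :
    ∏ n ∈ Icc 2 B, (1 + (2 * n - 1) / (n - 1) ^ 2 / n : ℚ) ≤ 10 := by
  -- the `n`-th factor is at most `(1 + 1 / (n * (n - 2))) ^ 2`, which telescopes
  have telescope (N : ℕ) (hN : 1 ≤ N) :
      ∏ n ∈ Icc 2 (N + 1), (1 + (2 * n - 1) / (n - 1) ^ 2 / n : ℚ) ≤ 10 * (N / (N + 1)) ^ 2 := by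
    induction N, hN using Nat.le_induction with
    | base => norm_num
    | succ N hN ih =>
      have hN' : (1 : ℚ) ≤ N := by exact_mod_cast hN
      rw [prod_Icc_succ_top (by omega)]
      refine (mul_le_mul_of_nonneg_right ih ?_).trans ?_
      · push_cast
        have : (0 : ℚ) ≤ 2 * (N + 1 + 1) - 1 := by linarith
        positivity
      · push_cast
        rw [div_pow, div_pow, ← sub_nonneg]
        field_simp
        ring_nf
        positivity
  rcases Nat.lt_or_ge B 2 with hB | hB
  · rw [Icc_eq_empty (by omega), prod_empty]
    norm_num
  · obtain ⟨N, rfl⟩ : ∃ N, B = N + 1 := ⟨B - 1, by omega⟩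
    refine (telescope N (by omega)).trans ?_
    have : (N : ℚ) / (N + 1) ≤ 1 := div_le_one_of_le₀ (by linarith) (by positivity)
    have : 0 ≤ (N : ℚ) / (N + 1) := by positivity
    nlinarith

theorem sum_Ioc_div_totient_sq_le (B : ℕ) : ∑ m ∈ Ioc 0 B, ((m : ℚ) / φ m) ^ 2 ≤ 10 * B := by
  have hg (n : ℕ) (hn : 2 ≤ n) : (0 : ℚ) ≤ (2 * n - 1) / (n - 1) ^ 2 := by
    have : (2 : ℚ) ≤ n := by exact_mod_cast hn
    have : (0 : ℚ) ≤ 2 * n - 1 := by linarith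
    positivity
  calc ∑ m ∈ Ioc 0 B, ((m : ℚ) / φ m) ^ 2
      = ∑ m ∈ Ioc 0 B, ∏ p ∈ m.primeFactors, (1 + (2 * p - 1) / (p - 1) ^ 2 : ℚ) :=
        sum_congr rfl fun m hm => div_totient_sq_eq_prod_primeFactors (mem_Ioc.1 hm).1.ne'
    _ ≤ B * ∏ p ∈ Icc 2 B with p.Prime, (1 + (2 * p - 1) / (p - 1) ^ 2 / p : ℚ) :=
        sum_prod_primeFactors_one_add_le _ (fun p hp => hg p hp.two_le) B
    _ ≤ B * ∏ n ∈ Icc 2 B, (1 + (2 * n - 1) / (n - 1) ^ 2 / n : ℚ) := by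
        have hone : ∀ n ∈ Icc 2 B, (1 : ℚ) ≤ 1 + (2 * n - 1) / (n - 1) ^ 2 / n := fun n hn =>
          le_add_of_nonneg_right (div_nonneg (hg n (mem_Icc.1 hn).1) n.cast_nonneg)
        refine mul_le_mul_of_nonneg_left ?_ B.cast_nonneg
        exact prod_le_prod_of_subset_of_one_le (filter_subset _ _)
          (fun n hn => zero_le_one.trans (hone n (mem_filter.1 hn).1)) fun n hn _ => hone n hn
    _ ≤ B * 10 := by gcongr; exact prod_Icc_one_add_div_le_ten B
    _ = 10 * B := mul_comm _ _

theorem le_ten_mul_totient_sq (m : ℕ) : m ≤ 10 * φ m ^ 2 := by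
  rcases Nat.eq_zero_or_pos m with rfl | hm
  · exact Nat.zero_le _
  have hφ : (0 : ℚ) < φ m := by exact_mod_cast Nat.totient_pos.2 hm
  have hmQ : (0 : ℚ) < m := by exact_mod_cast hm
  have h : ((m : ℚ) / φ m) ^ 2 ≤ 10 * m :=
    (single_le_sum (f := fun n : ℕ => ((n : ℚ) / φ n) ^ 2) (fun n _ => sq_nonneg _)
      (right_mem_Ioc.2 hm)).trans (sum_Ioc_div_totient_sq_le m)
  rw [div_pow, div_le_iff₀ (by positivity)] at h
  have h' : (m : ℚ) * m ≤ m * (10 * φ m ^ 2) := by linarith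
  exact_mod_cast le_of_mul_le_mul_left h' hmQ

theorem card_Ioc_two_mul_filter_totient_le_mul_le (D X : ℕ) :
    #{m ∈ Ioc X (2 * X) | φ m ≤ D} * X ≤ 20 * D ^ 2 := by
  rcases Nat.eq_zero_or_pos X with rfl | hX
  · simp
  set T := {m ∈ Ioc X (2 * X) | φ m ≤ D}
  have hm_le (m : ℕ) (hm : m ∈ T) : (m : ℚ) ^ 2 ≤ D ^ 2 * ((m : ℚ) / φ m) ^ 2 := by
    obtain ⟨hmX, hφD⟩ := mem_filter.1 hm
    have hφ : (0 : ℚ) < φ m := by exact_mod_cast Nat.totient_pos.2 (by grind)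
    rw [← mul_pow]
    refine pow_le_pow_left₀ (Nat.cast_nonneg m) ?_ 2
    calc (m : ℚ) = φ m * (m / φ m) := (mul_div_cancel₀ _ hφ.ne').symm
      _ ≤ D * (m / φ m) := by gcongr
  have hXQ : (0 : ℚ) < X := by exact_mod_cast hX
  have key : (#T : ℚ) * X * X ≤ 20 * D ^ 2 * X :=
    calc (#T : ℚ) * X * X = ∑ _m ∈ T, (X : ℚ) ^ 2 := by rw [sum_const, nsmul_eq_mul]; ring
      _ ≤ ∑ m ∈ T, (m : ℚ) ^ 2 := by
          gcongr with m hm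
          exact_mod_cast (mem_Ioc.1 (mem_filter.1 hm).1).1.le
      _ ≤ ∑ m ∈ T, D ^ 2 * ((m : ℚ) / φ m) ^ 2 := sum_le_sum hm_le
      _ ≤ ∑ m ∈ Ioc 0 (2 * X), D ^ 2 * ((m : ℚ) / φ m) ^ 2 := by
          refine sum_le_sum_of_subset_of_nonneg (fun m hm => ?_) fun _ _ _ => by positivity
          have := mem_Ioc.1 (mem_filter.1 hm).1
          exact mem_Ioc.2 ⟨by omega, this.2⟩
      _ ≤ D ^ 2 * (10 * (2 * X : ℕ)) := by
          rw [← mul_sum]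
          gcongr
          exact sum_Ioc_div_totient_sq_le _
      _ = 20 * D ^ 2 * X := by push_cast; ring
  exact_mod_cast le_of_mul_le_mul_right key hXQ

theorem card_Ioc_two_pow_mul_filter_totient_le (D X k : ℕ) :
    (#{m ∈ Ioc 0 (2 ^ k * X) | φ m ≤ D} : ℚ) + 40 * D ^ 2 / (2 ^ k * X) ≤
      X + 40 * D ^ 2 / X := by
  rcases Nat.eq_zero_or_pos X with rfl | hX
  · simp
  induction k with
  | zero =>
    simp only [pow_zero, one_mul, add_le_add_iff_right]
    exact_mod_cast (card_filter_le _ _).trans (Nat.card_Ioc 0 X).le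
  | succ k ih =>
    have hsplit :
        Ioc 0 (2 ^ (k + 1) * X) = Ioc 0 (2 ^ k * X) ∪ Ioc (2 ^ k * X) (2 * (2 ^ k * X)) := by
      rw [Ioc_union_Ioc_eq_Ioc (Nat.zero_le _) (by omega)]
      ring_nf
    have hblock := card_Ioc_two_mul_filter_totient_le_mul_le D (2 ^ k * X)
    have hpos : (0 : ℚ) < 2 ^ k * X := by positivity
    have hblockQ : (#{m ∈ Ioc (2 ^ k * X) (2 * (2 ^ k * X)) | φ m ≤ D} : ℚ) ≤
        20 * D ^ 2 / (2 ^ k * X) := by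
      rw [le_div_iff₀ hpos]
      exact_mod_cast hblock
    have hcard := card_union_le {m ∈ Ioc 0 (2 ^ k * X) | φ m ≤ D}
      {m ∈ Ioc (2 ^ k * X) (2 * (2 ^ k * X)) | φ m ≤ D}
    rw [← filter_union, ← hsplit] at hcard
    have hcardQ : (#{m ∈ Ioc 0 (2 ^ (k + 1) * X) | φ m ≤ D} : ℚ) ≤
        #{m ∈ Ioc 0 (2 ^ k * X) | φ m ≤ D} +
          #{m ∈ Ioc (2 ^ k * X) (2 * (2 ^ k * X)) | φ m ≤ D} := by
      exact_mod_cast hcard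
    have hhalve : (40 : ℚ) * D ^ 2 / (2 ^ (k + 1) * X) = 20 * D ^ 2 / (2 ^ k * X) := by
      rw [pow_succ]; field_simp; ring
    have hdouble : (40 : ℚ) * D ^ 2 / (2 ^ k * X) = 2 * (20 * D ^ 2 / (2 ^ k * X)) := by ring
    rw [hhalve]
    linarith

theorem card_Ioc_filter_totient_le (D B : ℕ) : #{m ∈ Ioc 0 B | φ m ≤ D} ≤ 22 * D := by
  rcases Nat.eq_zero_or_pos D with rfl | hD
  · simp only [nonpos_iff_eq_zero, Nat.totient_eq_zero, mul_zero, card_eq_zero,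
      filter_eq_empty_iff]
    exact fun m hm => (mem_Ioc.1 hm).1.ne'
  have hB : B ≤ 2 ^ B * (2 * D) :=
    Nat.lt_two_pow_self.le.trans (Nat.le_mul_of_pos_right _ (by omega))
  have hsub : {m ∈ Ioc 0 B | φ m ≤ D} ⊆ {m ∈ Ioc 0 (2 ^ B * (2 * D)) | φ m ≤ D} :=
    filter_subset_filter _ (Ioc_subset_Ioc_right hB)
  have h := card_Ioc_two_pow_mul_filter_totient_le D (2 * D) B
  have hD' : (0 : ℚ) < D := by exact_mod_cast hD
  have hfirst : (40 : ℚ) * D ^ 2 / (2 * D) = 20 * D := by field_simp; ring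
  have htail : (0 : ℚ) ≤ 40 * D ^ 2 / (2 ^ B * (2 * D)) := by positivity
  push_cast at h
  rw [hfirst] at h
  have hcard : (#{m ∈ Ioc 0 (2 ^ B * (2 * D)) | φ m ≤ D} : ℚ) ≤ 22 * D := by linarith
  exact (card_le_card hsub).trans (by exact_mod_cast hcard)

theorem IsRootOfUnity.orderOf_pos {α : ℂ} (h : IsRootOfUnity α) : 0 < orderOf α := by
  obtain ⟨n, hn, hαn⟩ := h
  exact (isOfFinOrder_iff_pow_eq_one.2 ⟨n, hn, hαn⟩).orderOf_pos

theorem IsRootOfUnity.natDegree_minpoly {α : ℂ} (h : IsRootOfUnity α) :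
    (minpoly ℚ α).natDegree = φ (orderOf α) := by
  rw [← cyclotomic_eq_minpoly_rat (IsPrimitiveRoot.orderOf α) h.orderOf_pos,
    natDegree_cyclotomic]

theorem count_roots_of_unity_of_bounded_degree_general (D : ℕ) :
    {α : ℂ | IsRootOfUnity α ∧ (minpoly ℚ α).natDegree ≤ D}.Finite ∧
    {α : ℂ | IsRootOfUnity α ∧ (minpoly ℚ α).natDegree ≤ D}.ncard ≤ 23 * D ^ 2 := by
  set M := {m ∈ Ioc 0 (10 * D ^ 2) | φ m ≤ D}
  have hsub : {α : ℂ | IsRootOfUnity α ∧ (minpoly ℚ α).natDegree ≤ D} ⊆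
      ↑(M.biUnion fun m => primitiveRoots m ℂ) := by
    rintro α ⟨hα, hdeg⟩
    rw [hα.natDegree_minpoly] at hdeg
    have hord : orderOf α ≤ 10 * D ^ 2 :=
      (le_ten_mul_totient_sq _).trans (by gcongr)
    exact mem_biUnion.2 ⟨orderOf α, mem_filter.2 ⟨mem_Ioc.2 ⟨hα.orderOf_pos, hord⟩, hdeg⟩,
      (mem_primitiveRoots hα.orderOf_pos).2 (IsPrimitiveRoot.orderOf α)⟩
  refine ⟨(finite_toSet _).subset hsub, ?_⟩
  calc {α : ℂ | IsRootOfUnity α ∧ (minpoly ℚ α).natDegree ≤ D}.ncard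
      ≤ #(M.biUnion fun m => primitiveRoots m ℂ) :=
        (Set.ncard_le_ncard hsub (finite_toSet _)).trans_eq (Set.ncard_coe_finset _)
    _ ≤ ∑ m ∈ M, #(primitiveRoots m ℂ) := card_biUnion_le
    _ = ∑ m ∈ M, φ m := sum_congr rfl fun m _ => Complex.card_primitiveRoots m
    _ ≤ ∑ _m ∈ M, D := sum_le_sum fun m hm => (mem_filter.1 hm).2
    _ = #M * D := by rw [sum_const, smul_eq_mul]
    _ ≤ 22 * D * D := by gcongr; exact card_Ioc_filter_totient_le D _
    _ ≤ 23 * D ^ 2 := by nlinarith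

/-- **Lemma (counting roots of unity of bounded degree).** For every positive integer
$D$, the number of roots of unity whose degree over $ℚ$ is at most $D$ is at most
$23 D^2$. -/
theorem count_roots_of_unity_of_bounded_degree (D : ℕ) (hD : 0 < D) :
    {α : ℂ | IsRootOfUnity α ∧ (minpoly ℚ α).natDegree ≤ D}.Finite ∧
    {α : ℂ | IsRootOfUnity α ∧ (minpoly ℚ α).natDegree ≤ D}.ncard ≤ 23 * D ^ 2 :=
  count_roots_of_unity_of_bounded_degree_general D

end
end
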